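/- arXiv:math/0212066 — 2 statements merged into one kernel-verified Lean document; each statement's English description precedes it below -/
import Mathlib

section
/- If n is a prime number, then 4n ≠ C(4m, 2m) for every natural number m ≥ 1; in other words, for a prime n the number 4n does not belong to the set {C(4m, 2m) | m ∈ ℕ, m ≥ 1}. (This is the arithmetic claim used in case (d′) of the proof of Theorem 7.1 of the paper.) -/
/-!
By Bertrand's postulate there is a prime `p` with `2m < p ≤ 4m`, and it divides `C(4m, 2m)`.
If `C(4m, 2m) = 4n` with `n` prime, then `p` is odd, so `p = n ≤ 4m`. Hence `C(4m, 2m) ≤ 16m`,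
which fails for `m ≥ 2` because `C(2k, k) > 8k` once `k ≥ 4`; for `m = 1`,
`C(4, 2) = 6` is not divisible by `4`.
-/

namespace Nat

theorem Prime.dvd_centralBinom_of_lt_of_le {p k : ℕ} (hp : p.Prime) (hkp : k < p)
    (hpk : p ≤ 2 * k) : p ∣ centralBinom k := by
  rw [centralBinom_eq_two_mul_choose]
  exact hp.dvd_choose hkp (by omega) hpk

theorem exists_prime_lt_and_le_two_mul_and_dvd_centralBinom {k : ℕ} (hk : k ≠ 0) :
    ∃ p, p.Prime ∧ k < p ∧ p ≤ 2 * k ∧ p ∣ centralBinom k := by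
  obtain ⟨p, hp, hkp, hpk⟩ := exists_prime_lt_and_le_two_mul k hk
  exact ⟨p, hp, hkp, hpk, hp.dvd_centralBinom_of_lt_of_le hkp hpk⟩

theorem eight_mul_lt_centralBinom {k : ℕ} (hk : 4 ≤ k) : 8 * k < centralBinom k := by
  induction k, hk using Nat.le_induction with
  | base => decide
  | succ k hk ih =>
    have hrec := succ_mul_centralBinom_succ k
    nlinarith

theorem Prime.eq_of_dvd_four_mul {p n : ℕ} (hp : p.Prime) (hn : n.Prime) (hp2 : 2 < p)
    (hdvd : p ∣ 4 * n) : p = n := by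
  have hcop : Coprime p 4 :=
    ((coprime_primes hp prime_two).2 (by omega)).pow_right 2
  exact (prime_dvd_prime_iff_eq hp hn).1 (hcop.dvd_of_dvd_mul_left hdvd)

end Nat

/-- If `n` is a prime number, then `4 * n ≠ (4 * m).choose (2 * m)` for every
natural number `m ≥ 1`. -/
theorem four_mul_prime_ne_central_binom (n : ℕ) (hn : n.Prime) :
    ∀ m : ℕ, 1 ≤ m → 4 * n ≠ Nat.choose (4 * m) (2 * m) := by
  intro m hm h
  have hc : Nat.centralBinom (2 * m) = 4 * n := by
    rw [h, Nat.centralBinom_eq_two_mul_choose, ← mul_assoc]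
    norm_num
  obtain rfl | hm2 : m = 1 ∨ 2 ≤ m := by omega
  · rw [show Nat.centralBinom (2 * 1) = 6 by decide] at hc
    omega
  obtain ⟨p, hp, hlt, hle, hdvd⟩ :=
    Nat.exists_prime_lt_and_le_two_mul_and_dvd_centralBinom (k := 2 * m) (by omega)
  have hpn : p = n := hp.eq_of_dvd_four_mul hn (by omega) (hc ▸ hdvd)
  have hbig := Nat.eight_mul_lt_centralBinom (k := 2 * m) (by omega)
  omega
end

section
/- Let n be an odd natural number and let m ≥ 1 be a natural number such that 2n = C(4m, 2m). Then m is a power of 2; consequently there exists a natural number k ≥ 1 such that 2n = C(2^(k+1), 2^k). (This is the arithmetic claim used in case (d) of the proof of Theorem 7.1 of the paper: an even number 2n with n odd that is not of the form C(2^(m+1), 2^m) for any m ∈ ℕ is also not of the form C(4m, 2m) for any m ∈ ℕ.) -/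
/-!
By Kummer's theorem, the `2`-adic valuation of the central binomial coefficient `C(2a, a)` is the
binary digit sum of `a`. If `2n = C(4m, 2m)` with `n` odd, this valuation is `1`, so `2m`, and
hence `m`, has exactly one binary digit equal to `1`, i.e. `m` is a power of `2`.
-/

namespace Nat

theorem eq_zero_of_digits_sum_eq_zero {b n : ℕ} (h : (b.digits n).sum = 0) : n = 0 := by
  by_contra hn
  exact getLast_digit_ne_zero b hn <| Nat.le_zero.mp <| h.le.trans' <|
    List.le_sum_of_mem (List.getLast_mem _)

theorem digits_sum_base_mul {b n : ℕ} (hb : 1 < b) :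
    (b.digits (b * n)).sum = (b.digits n).sum := by
  rcases n.eq_zero_or_pos with rfl | hn
  · simp
  · simp [digits_base_mul hb hn]

theorem exists_eq_pow_of_digits_sum_eq_one {b n : ℕ} (hb : 1 < b)
    (h : (b.digits n).sum = 1) : ∃ j, n = b ^ j := by
  induction n using Nat.strong_induction_on with
  | _ n ih =>
    have hn : n ≠ 0 := by rintro rfl; simp at h
    rw [digits_def' hb (pos_of_ne_zero hn), List.sum_cons] at h
    have hdiv := Nat.div_add_mod n b
    rcases Nat.lt_or_ge (n % b) 1 with hmod | hmod
    · obtain ⟨j, hj⟩ := ih (n / b) (div_lt_self (pos_of_ne_zero hn) hb) (by omega)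
      exact ⟨j + 1, by rw [pow_succ', ← hj]; omega⟩
    · have hq : n / b = 0 := eq_zero_of_digits_sum_eq_zero (b := b) (by omega)
      exact ⟨0, by rw [hq, mul_zero] at hdiv; rw [pow_zero]; omega⟩

theorem padicValNat_two_centralBinom (n : ℕ) :
    padicValNat 2 (centralBinom n) = (digits 2 n).sum := by
  have kummer := sub_one_mul_padicValNat_choose_eq_sub_sum_digits' (p := 2) (k := n) (n := n)
  rw [← two_mul, ← centralBinom_eq_two_mul_choose, digits_sum_base_mul one_lt_two] at kummer
  omega

end Nat

theorem odd_double_eq_central_binom_imp_general (n m : ℕ) (hn : ¬ 2 ∣ n)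
    (h : 2 * n = Nat.choose (4 * m) (2 * m)) :
    (∃ j : ℕ, m = 2 ^ j) ∧
      ∃ k : ℕ, 1 ≤ k ∧ 2 * n = Nat.choose (2 ^ (k + 1)) (2 ^ k) := by
  have hval : padicValNat 2 (2 * n) = 1 := by
    rw [padicValNat.mul two_ne_zero (by rintro rfl; exact hn (dvd_zero 2)),
      padicValNat.self one_lt_two, padicValNat.eq_zero_of_not_dvd hn]
  have hcentral : Nat.choose (4 * m) (2 * m) = Nat.centralBinom (2 * m) := by
    rw [Nat.centralBinom_eq_two_mul_choose, ← mul_assoc]; rfl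
  rw [h, hcentral, Nat.padicValNat_two_centralBinom, Nat.digits_sum_base_mul one_lt_two] at hval
  obtain ⟨j, rfl⟩ := Nat.exists_eq_pow_of_digits_sum_eq_one one_lt_two hval
  refine ⟨⟨j, rfl⟩, j + 1, le_add_self, ?_⟩
  rw [h]
  congr 1 <;> ring

/-- If `n` is odd and `m ≥ 1` satisfies `2 * n = (4 * m).choose (2 * m)`, then `m` is a
power of `2`, and consequently there exists `k ≥ 1` with
`2 * n = (2 ^ (k + 1)).choose (2 ^ k)`. -/
theorem odd_double_eq_central_binom_imp (n m : ℕ) (hn : ¬ 2 ∣ n) (hm : 1 ≤ m)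
    (h : 2 * n = Nat.choose (4 * m) (2 * m)) :
    (∃ j : ℕ, m = 2 ^ j) ∧
      ∃ k : ℕ, 1 ≤ k ∧ 2 * n = Nat.choose (2 ^ (k + 1)) (2 ^ k) :=
  odd_double_eq_central_binom_imp_general n m hn h
end
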